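/- arXiv:2009.01114 — 9 statements merged into one kernel-verified Lean document; each statement's English description precedes it below -/
import Mathlib

section
/- Let b ≥ 3 and let n be an integer of the form n = d·b^k − 1 with 2 ≤ d ≤ b and k ≥ 1 (i.e., all digits of n below the leading digit equal b−1 and the leading digit is d−1). Then S_{1,b}(n) = d·b^k = n+1, and 2 ≤ S_{1,b}(S_{1,b}(n)) ≤ b. -/
/-- The t-shifted Sloane map in base b: product of (digit + t) over base-b digits. -/
def shiftedSloane (t b n : ℕ) : ℕ := ((Nat.digits b n).map (· + t)).prod

lemma digits_mul_pow_sub_one (b : ℕ) (hb : 1 < b) :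
    ∀ (k d : ℕ), 1 ≤ d →
      Nat.digits b (d * b ^ k - 1) = List.replicate k (b - 1) ++ Nat.digits b (d - 1) := by
  intro k
  induction k with
  | zero => intro d _; simp
  | succ k ih =>
    intro d hd
    obtain ⟨m, hm⟩ : ∃ m, d * b ^ k = m + 1 :=
      ⟨d * b ^ k - 1, (Nat.succ_pred_eq_of_pos (by positivity)).symm⟩
    have key : d * b ^ (k + 1) - 1 = (b - 1) + m * b := by
      have h1 : d * b ^ (k + 1) = (m + 1) * b := by rw [pow_succ, ← mul_assoc, hm]
      rw [h1, add_mul, one_mul]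
      omega
    have hpos : 0 < d * b ^ (k + 1) - 1 := by
      have h1 : d * b ^ (k + 1) = (m + 1) * b := by rw [pow_succ, ← mul_assoc, hm]
      have : b ≤ (m + 1) * b := Nat.le_mul_of_pos_left b (Nat.succ_pos m)
      omega
    rw [Nat.digits_def' hb hpos, key]
    have hmod : ((b - 1) + m * b) % b = b - 1 := by
      rw [Nat.add_mul_mod_self_right, Nat.mod_eq_of_lt (by omega)]
    have hdiv : ((b - 1) + m * b) / b = m := by
      rw [Nat.add_mul_div_right _ _ (by omega), Nat.div_eq_of_lt (by omega), zero_add]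
    rw [hmod, hdiv]
    have hmeq : m = d * b ^ k - 1 := by omega
    rw [hmeq, ih d hd]
    rfl

theorem shifted_sloane_one_all_nines (b d k n : ℕ) (hb : 3 ≤ b)
    (hd2 : 2 ≤ d) (hdb : d ≤ b) (hk : 1 ≤ k) (hn : n = d * b ^ k - 1) :
    shiftedSloane 1 b n = n + 1 ∧
    2 ≤ shiftedSloane 1 b (shiftedSloane 1 b n) ∧
    shiftedSloane 1 b (shiftedSloane 1 b n) ≤ b := by
  have hb1 : 1 < b := by omega
  have hd1 : Nat.digits b (d - 1) = [d - 1] :=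
    Nat.digits_of_lt b (d - 1) (by omega) (by omega)
  have hS1 : shiftedSloane 1 b n = n + 1 := by
    rw [hn, shiftedSloane, digits_mul_pow_sub_one b hb1 k d (by omega), hd1]
    simp [List.prod_replicate]
    have : b - 1 + 1 = b := by omega
    rw [this]
    have : d - 1 + 1 = d := by omega
    rw [this]
    have hpos : 0 < d * b ^ k := by positivity
    rw [Nat.sub_add_cancel hpos, mul_comm]
  refine ⟨hS1, ?_, ?_⟩ <;>
    rw [hS1, hn, Nat.sub_add_cancel (Nat.mul_pos (by omega) (pow_pos (by omega) k))]
  · rcases Nat.lt_or_ge d b with hlt | hge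
    · have : Nat.digits b (d * b ^ k) = List.replicate k 0 ++ [d] := by
        rw [mul_comm, Nat.digits_base_pow_mul hb1 (by omega),
          Nat.digits_of_lt b d (by omega) hlt]
      rw [shiftedSloane, this]
      simp [List.prod_replicate]
      omega
    · have hdb' : d = b := le_antisymm hdb hge
      have : d * b ^ k = b ^ (k + 1) * 1 := by rw [hdb', pow_succ, mul_comm, mul_one]
      rw [this, shiftedSloane, Nat.digits_base_pow_mul hb1 one_pos,
        Nat.digits_of_lt b 1 one_ne_zero (by omega)]
      simp [List.prod_replicate]
  · rcases Nat.lt_or_ge d b with hlt | hge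
    · have : Nat.digits b (d * b ^ k) = List.replicate k 0 ++ [d] := by
        rw [mul_comm, Nat.digits_base_pow_mul hb1 (by omega),
          Nat.digits_of_lt b d (by omega) hlt]
      rw [shiftedSloane, this]
      simp [List.prod_replicate]
      omega
    · have hdb' : d = b := le_antisymm hdb hge
      have : d * b ^ k = b ^ (k + 1) * 1 := by rw [hdb', pow_succ, mul_comm, mul_one]
      rw [this, shiftedSloane, Nat.digits_base_pow_mul hb1 one_pos,
        Nat.digits_of_lt b 1 one_ne_zero (by omega)]
      simp [List.prod_replicate]
      omega
end

section
/- Let b ≥ 3 and let n be a positive integer that is neither of the form d·b^k − 1 with 2 ≤ d ≤ b, nor of the form b^k + (b−2)·b^{k−1} with k ≥ 1. If n ≥ b then S_{1,b}(n) < n. -/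
/-!
Write `n = r + b * q` with `r` the last digit, so that `S(n) = (r + 1) * S(q)`. An induction
shows `S(q) ≤ q + 1`. If `S(q) ≤ q` then already `(r + 1) * q < r + b * q`. If `S(q) = q + 1`,
then `(r + 1) * (q + 1) < r + b * q` fails only for `r = b - 1` or `(q, r) = (1, b - 2)`; the
second case is `n = b + (b - 2)`, and in the first `q + 1 = d * b ^ k` with `2 ≤ d ≤ b` (the
same induction characterizes `S(q) = q + 1`), so `n = d * b ^ (k + 1) - 1`.
-/

theorem Nat.last_digit_induction {b : ℕ} (hb : 1 < b) {P : ℕ → Prop} (zero : P 0)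
    (step : ∀ r q, r < b → (r ≠ 0 ∨ q ≠ 0) → P q → P (r + b * q)) (n : ℕ) : P n := by
  induction n using Nat.strong_induction_on with
  | _ n ih =>
  rcases n.eq_zero_or_pos with rfl | hn
  · exact zero
  rw [← Nat.mod_add_div n b]
  refine step _ _ (Nat.mod_lt _ (by omega)) ?_ (ih _ (Nat.div_lt_self hn hb))
  by_contra! h
  have := Nat.mod_add_div n b
  rw [h.1, h.2] at this
  omega

section

variable {b : ℕ}

@[simp]
theorem shiftedSloane_zero (t : ℕ) : shiftedSloane t b 0 = 1 := by
  simp [shiftedSloane]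

theorem shiftedSloane_add_mul (t : ℕ) (hb : 1 < b) {r q : ℕ} (hr : r < b) (h : r ≠ 0 ∨ q ≠ 0) :
    shiftedSloane t b (r + b * q) = (r + t) * shiftedSloane t b q := by
  simp [shiftedSloane, Nat.digits_add b hb r q hr h]

theorem shiftedSloane_one_le_succ (hb : 1 < b) (n : ℕ) : shiftedSloane 1 b n ≤ n + 1 := by
  induction n using Nat.last_digit_induction hb with
  | zero => simp
  | step r q hr hrq ih =>
    rw [shiftedSloane_add_mul 1 hb hr hrq]
    calc (r + 1) * shiftedSloane 1 b q ≤ (r + 1) * (q + 1) := Nat.mul_le_mul_left _ ih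
      _ ≤ r + b * q + 1 := by nlinarith

theorem exists_succ_eq_mul_pow_of_shiftedSloane_one_eq_succ (hb : 1 < b) {n : ℕ} (hn : 0 < n)
    (h : shiftedSloane 1 b n = n + 1) : ∃ d k, 2 ≤ d ∧ d ≤ b ∧ n + 1 = d * b ^ k := by
  induction n using Nat.last_digit_induction hb with
  | zero => omega
  | step r q hr hrq ih =>
    rw [shiftedSloane_add_mul 1 hb hr hrq] at h
    rcases Nat.eq_zero_or_pos q with rfl | hq
    · exact ⟨r + 1, 0, by omega, by omega, by simp⟩
    have hSq := shiftedSloane_one_le_succ hb q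
    -- `S(q) ≤ q` would give `(r + 1) * S(q) ≤ b * q < r + b * q + 1`
    have hSq_eq : shiftedSloane 1 b q = q + 1 := by
      by_contra hne
      have : (r + 1) * shiftedSloane 1 b q ≤ (r + 1) * q := Nat.mul_le_mul_left _ (by omega)
      nlinarith
    rw [hSq_eq] at h
    have hr_eq : r = b - 1 := by
      by_contra hne
      nlinarith [Nat.mul_le_mul_right q (show r + 2 ≤ b by omega)]
    obtain ⟨d, k, hd, hdb, hqd⟩ := ih hq hSq_eq
    exact ⟨d, k + 1, hd, hdb, by rw [pow_succ, hr_eq]; grind⟩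

end

theorem shifted_sloane_one_decreasing (b n : ℕ) (hb : 3 ≤ b) (hn : b ≤ n)
    (h1 : ¬ ∃ d k : ℕ, 2 ≤ d ∧ d ≤ b ∧ n = d * b ^ k - 1)
    (h2 : ¬ ∃ k : ℕ, 1 ≤ k ∧ n = b ^ k + (b - 2) * b ^ (k - 1)) :
    shiftedSloane 1 b n < n := by
  have hb1 : 1 < b := by omega
  obtain ⟨r, q, hr, rfl⟩ : ∃ r q, r < b ∧ n = r + b * q :=
    ⟨n % b, n / b, Nat.mod_lt _ (by omega), (Nat.mod_add_div n b).symm⟩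
  have hq : 0 < q := by nlinarith
  rw [shiftedSloane_add_mul 1 hb1 hr (by omega)]
  rcases (shiftedSloane_one_le_succ hb1 q).lt_or_eq with hlt | heq
  · calc (r + 1) * shiftedSloane 1 b q ≤ (r + 1) * q := Nat.mul_le_mul_left _ (by omega)
      _ < r + b * q := by nlinarith
  rw [heq]
  have hr_ne : r ≠ b - 1 := by
    rintro rfl
    obtain ⟨d, k, hd, hdb, hqd⟩ := exists_succ_eq_mul_pow_of_shiftedSloane_one_eq_succ hb1 hq heq
    exact h1 ⟨d, k + 1, hd, hdb, by rw [pow_succ, ← mul_assoc, ← hqd]; grind⟩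
  have hqr : ¬ (q = 1 ∧ r = b - 2) := by
    rintro ⟨rfl, rfl⟩
    exact h2 ⟨1, le_rfl, by simp only [mul_one, pow_one, tsub_self, pow_zero]; omega⟩
  rcases (show r + 3 ≤ b ∨ (r + 2 = b ∧ 2 ≤ q) by omega) with hr3 | ⟨hr2, hq2⟩
  · nlinarith [Nat.mul_le_mul_right q hr3]
  · subst hr2; nlinarith
end

section
/- For every positive integer n, the sequence of iterates of S_{1,3} starting at n reaches the cycle (2, 3) if and only if either n or 2^{#1(n)_3} has no digit 1 in its ternary expansion; otherwise it reaches the fixed point 4. -/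
open Nat

theorem shiftedSloane_base_pow_mul {t b k m : ℕ} (hb : 1 < b) (hm : 0 < m) :
    shiftedSloane t b (b ^ k * m) = t ^ k * shiftedSloane t b m := by
  simp [shiftedSloane, digits_base_pow_mul hb hm]

theorem count_digits_base_pow_mul {b k m c : ℕ} (hb : 1 < b) (hm : 0 < m) (hc : c ≠ 0) :
    (digits b (b ^ k * m)).count c = (digits b m).count c := by
  simp [digits_base_pow_mul hb hm, List.count_replicate, Ne.symm hc]

theorem prod_map_add_one_of_forall_lt_three {L : List ℕ} (hL : ∀ d ∈ L, d < 3) :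
    (L.map (· + 1)).prod = 2 ^ L.count 1 * 3 ^ L.count 2 := by
  induction L with
  | nil => simp
  | cons d L ih =>
    have hd : d < 3 := hL d List.mem_cons_self
    rw [List.map_cons, List.prod_cons, List.count_cons, List.count_cons,
      ih fun x hx => hL x (List.mem_cons_of_mem d hx)]
    interval_cases d <;> simp <;> ring

theorem sum_eq_count_one_add_two_mul_count_two {L : List ℕ} (hL : ∀ d ∈ L, d < 3) :
    L.sum = L.count 1 + 2 * L.count 2 := by
  induction L with
  | nil => simp
  | cons d L ih =>
    have hd : d < 3 := hL d List.mem_cons_self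
    rw [List.sum_cons, List.count_cons, List.count_cons,
      ih fun x hx => hL x (List.mem_cons_of_mem d hx)]
    interval_cases d <;> simp <;> ring

theorem shiftedSloane_one_three (n : ℕ) :
    shiftedSloane 1 3 n = 2 ^ (digits 3 n).count 1 * 3 ^ (digits 3 n).count 2 :=
  prod_map_add_one_of_forall_lt_three fun _ hd => digits_lt_base (by norm_num) hd

theorem shiftedSloane_one_three_eq_three_pow_mul (n : ℕ) :
    shiftedSloane 1 3 n = 3 ^ (digits 3 n).count 2 * 2 ^ (digits 3 n).count 1 := by
  rw [shiftedSloane_one_three, mul_comm]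

theorem count_one_digits_shiftedSloane_one_three (n : ℕ) :
    (digits 3 (shiftedSloane 1 3 n)).count 1 = (digits 3 (2 ^ (digits 3 n).count 1)).count 1 := by
  rw [shiftedSloane_one_three_eq_three_pow_mul,
    count_digits_base_pow_mul (by norm_num) (by positivity) one_ne_zero]

theorem shiftedSloane_one_three_shiftedSloane (n : ℕ) :
    shiftedSloane 1 3 (shiftedSloane 1 3 n) = shiftedSloane 1 3 (2 ^ (digits 3 n).count 1) := by
  rw [shiftedSloane_one_three_eq_three_pow_mul n, shiftedSloane_base_pow_mul (by norm_num)
    (by positivity), one_pow, one_mul]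

theorem count_one_digits_three_mod_two (m : ℕ) : (digits 3 m).count 1 % 2 = m % 2 := by
  have hsum : (digits 3 m).sum = (digits 3 m).count 1 + 2 * (digits 3 m).count 2 :=
    sum_eq_count_one_add_two_mul_count_two fun _ hd => digits_lt_base (by norm_num) hd
  have := modEq_digits_sum 2 3 rfl m
  unfold Nat.ModEq at this
  omega

theorem count_one_digits_three_pos_of_mod_three {m : ℕ} (hm : m % 3 = 1) :
    0 < (digits 3 m).count 1 := by
  rw [digits_def' (by norm_num) (by omega), hm]
  simp

theorem even_count_one_digits_three_two_pow {a : ℕ} (ha : a ≠ 0) :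
    Even ((digits 3 (2 ^ a)).count 1) := by
  rw [even_iff, count_one_digits_three_mod_two, Nat.pow_mod, Nat.mod_self, zero_pow ha,
    Nat.zero_mod]

theorem count_one_digits_three_two_pow_pos {a : ℕ} (ha : Even a) :
    0 < (digits 3 (2 ^ a)).count 1 := by
  obtain ⟨c, rfl⟩ := ha
  apply count_one_digits_three_pos_of_mod_three
  rw [← two_mul, pow_mul, pow_mod]
  norm_num

theorem count_one_digits_three_two_pow_lt {a : ℕ} (ha : 4 ≤ a) :
    (digits 3 (2 ^ a)).count 1 < a := by
  obtain ⟨k, rfl⟩ := Nat.exists_eq_add_of_le' ha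
  have hpow : 2 ^ (k + 4) < 3 ^ (k + 3) :=
    calc 2 ^ (k + 4) = 2 ^ k * 16 := by ring
      _ ≤ 3 ^ k * 16 := by gcongr; norm_num
      _ < 3 ^ k * 27 := by gcongr; norm_num
      _ = 3 ^ (k + 3) := by ring
  have hlen := (digits_length_le_iff (by norm_num) _).2 hpow
  have := List.count_le_length (a := 1) (l := digits 3 (2 ^ (k + 4)))
  omega

def HasPersistentOnes (n : ℕ) : Prop :=
  (digits 3 n).count 1 ≠ 0 ∧ (digits 3 (2 ^ (digits 3 n).count 1)).count 1 ≠ 0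

theorem not_hasPersistentOnes_iff {n : ℕ} : ¬ HasPersistentOnes n ↔
    (digits 3 n).count 1 = 0 ∨ (digits 3 (2 ^ (digits 3 n).count 1)).count 1 = 0 := by
  rw [HasPersistentOnes, not_and_or, not_not, not_not]

theorem mapsTo_shiftedSloane_hasPersistentOnes :
    Set.MapsTo (shiftedSloane 1 3) {n | HasPersistentOnes n} {n | HasPersistentOnes n} := by
  intro n h
  change HasPersistentOnes (shiftedSloane 1 3 n)
  rw [HasPersistentOnes, count_one_digits_shiftedSloane_one_three]
  exact ⟨h.2, (count_one_digits_three_two_pow_pos (even_count_one_digits_three_two_pow h.1)).ne'⟩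

theorem HasPersistentOnes.exists_iterate_eq_four {n : ℕ} (h : HasPersistentOnes n) :
    ∃ k, (shiftedSloane 1 3)^[k] n = 4 := by
  induction hn : (digits 3 n).count 1 using Nat.strong_induction_on generalizing n with
  | _ a ih =>
    rcases le_or_gt 4 a with ha | ha
    · obtain ⟨k, hk⟩ := ih ((digits 3 (2 ^ a)).count 1) (count_one_digits_three_two_pow_lt ha)
        (mapsTo_shiftedSloane_hasPersistentOnes h)
        (by rw [count_one_digits_shiftedSloane_one_three, hn])
      exact ⟨k + 1, hk⟩
    · -- `2 = 2₃` and `8 = 22₃` have no digit `1`, which rules out `a = 1` and `a = 3`.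
      have h2 : a = 2 := by
        obtain ⟨ha0, hf⟩ := h
        rw [hn] at ha0 hf
        interval_cases a <;> simp_all
      refine ⟨2, ?_⟩
      rw [Function.iterate_succ_apply, Function.iterate_one,
        shiftedSloane_one_three_shiftedSloane, hn, h2]
      norm_num [shiftedSloane]

theorem shiftedSloane_one_three_shiftedSloane_eq_two {n : ℕ}
    (h : (digits 3 n).count 1 = 0) : shiftedSloane 1 3 (shiftedSloane 1 3 n) = 2 := by
  rw [shiftedSloane_one_three_shiftedSloane, h]
  norm_num [shiftedSloane]

theorem exists_iterate_eq_two_of_not_hasPersistentOnes {n : ℕ} (h : ¬ HasPersistentOnes n) :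
    ∃ k, (shiftedSloane 1 3)^[k] n = 2 := by
  rcases not_hasPersistentOnes_iff.1 h with h | h
  · exact ⟨2, shiftedSloane_one_three_shiftedSloane_eq_two h⟩
  · rw [← count_one_digits_shiftedSloane_one_three] at h
    exact ⟨3, shiftedSloane_one_three_shiftedSloane_eq_two h⟩

theorem shifted_sloane_one_base_three_dichotomy_general (n : ℕ) :
    ((∃ k : ℕ, (shiftedSloane 1 3)^[k] n = 2 ∨ (shiftedSloane 1 3)^[k] n = 3) ↔
      ((Nat.digits 3 n).count 1 = 0 ∨
        (Nat.digits 3 (2 ^ ((Nat.digits 3 n).count 1))).count 1 = 0)) ∧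
    (¬ ((Nat.digits 3 n).count 1 = 0 ∨
        (Nat.digits 3 (2 ^ ((Nat.digits 3 n).count 1))).count 1 = 0) →
      ∃ k : ℕ, (shiftedSloane 1 3)^[k] n = 4) := by
  rw [← not_hasPersistentOnes_iff, not_not]
  refine ⟨⟨?_, fun h => (exists_iterate_eq_two_of_not_hasPersistentOnes h).imp fun _ => .inl⟩,
    HasPersistentOnes.exists_iterate_eq_four⟩
  rintro ⟨k, hk⟩ h
  have hk' := mapsTo_shiftedSloane_hasPersistentOnes.iterate k h
  rcases hk with hk | hk <;> rw [hk] at hk' <;> norm_num [HasPersistentOnes] at hk'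

theorem shifted_sloane_one_base_three_dichotomy (n : ℕ) (hn : 0 < n) :
    ((∃ k : ℕ, (shiftedSloane 1 3)^[k] n = 2 ∨ (shiftedSloane 1 3)^[k] n = 3) ↔
      ((Nat.digits 3 n).count 1 = 0 ∨
        (Nat.digits 3 (2 ^ ((Nat.digits 3 n).count 1))).count 1 = 0)) ∧
    (¬ ((Nat.digits 3 n).count 1 = 0 ∨
        (Nat.digits 3 (2 ^ ((Nat.digits 3 n).count 1))).count 1 = 0) →
      ∃ k : ℕ, (shiftedSloane 1 3)^[k] n = 4) :=
  shifted_sloane_one_base_three_dichotomy_general n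
end

section
/- Fix a base b ≥ 3 and let α = log(b−1)/log(b) < 1. For every integer n > b, if k_j denotes the number of base-b digits of the j-th iterate of the Erdős–Sloane map S_b^* at n, then k_{j+1} ≤ 1 + α·k_j for all j ≥ 0, and hence k_j ≤ α^j k_0 + 1/(1−α) for all j ≥ 1. -/
/-!
Every digit is at most `b - 1`, so a number with `k` digits is sent by `S_b^*` to at most
`(b - 1) ^ k`, whose base-`b` logarithm is `α k`; the digit count is at most one more than the
base-`b` logarithm, hence `k_{j+1} ≤ 1 + α k_j`. Unrolling this affine recurrence with
`0 ≤ α < 1` and summing the geometric series gives the second bound.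
-/

/-- The Erdős–Sloane map in base b: product of the nonzero base-b digits. -/
def erdosSloane (b n : ℕ) : ℕ := ((Nat.digits b n).filter (· ≠ 0)).prod

lemma le_pow_mul_add_div_one_sub_of_succ_le {x : ℕ → ℝ} {α c : ℝ} (hα0 : 0 ≤ α) (hα1 : α < 1)
    (hc : 0 ≤ c) (h : ∀ j, x (j + 1) ≤ c + α * x j) (j : ℕ) :
    x j ≤ α ^ j * x 0 + c / (1 - α) := by
  have hα1' : (1 : ℝ) - α ≠ 0 := (sub_pos.2 hα1).ne'
  induction j with
  | zero => simpa using div_nonneg hc (sub_pos.2 hα1).le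
  | succ j ih =>
    calc x (j + 1) ≤ c + α * x j := h j
      _ ≤ c + α * (α ^ j * x 0 + c / (1 - α)) := by gcongr
      _ = α ^ (j + 1) * x 0 + c / (1 - α) := by field_simp; ring

namespace Nat

lemma length_digits_le_one_add_logb {b m : ℕ} (hb : 1 < b) (hm : m ≠ 0) :
    ((digits b m).length : ℝ) ≤ 1 + Real.logb b m := by
  rw [length_digits b m hb hm, cast_add_one, add_comm]
  gcongr
  exact Real.natLog_le_logb m b

lemma erdosSloane_pos (b n : ℕ) : 0 < erdosSloane b n :=
  List.prod_pos fun _ hd => pos_of_ne_zero (of_decide_eq_true (List.mem_filter.mp hd).2)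

lemma erdosSloane_le_pow_length_digits {b : ℕ} (hb : 1 < b) (n : ℕ) :
    erdosSloane b n ≤ (b - 1) ^ (digits b n).length :=
  calc erdosSloane b n ≤ (b - 1) ^ ((digits b n).filter (· ≠ 0)).length :=
        List.prod_le_pow_card _ _ fun _ hd =>
          le_sub_one_of_lt (digits_lt_base hb (List.mem_filter.mp hd).1)
    _ ≤ (b - 1) ^ (digits b n).length :=
        Nat.pow_le_pow_right (by omega) (List.length_filter_le _ _)

lemma length_digits_erdosSloane_le {b : ℕ} (hb : 1 < b) (n : ℕ) :
    ((digits b (erdosSloane b n)).length : ℝ) ≤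
      1 + Real.logb b (b - 1) * (digits b n).length := by
  have hb' : (1 : ℝ) < b := by exact_mod_cast hb
  refine (length_digits_le_one_add_logb hb (erdosSloane_pos b n).ne').trans ?_
  gcongr
  calc Real.logb b (erdosSloane b n)
      ≤ Real.logb b (((b - 1 : ℕ) : ℝ) ^ (digits b n).length) :=
        Real.logb_le_logb_of_le hb' (by exact_mod_cast erdosSloane_pos b n)
          (by exact_mod_cast erdosSloane_le_pow_length_digits hb n)
    _ = Real.logb b (b - 1) * (digits b n).length := by
        rw [Real.logb_pow, cast_pred (by omega), mul_comm]

end Nat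

theorem erdos_sloane_digit_count_decay_general (b n : ℕ) (hb : 3 ≤ b) :
    let α : ℝ := Real.log (b - 1) / Real.log b
    let k : ℕ → ℕ := fun j => (Nat.digits b ((erdosSloane b)^[j] n)).length
    α < 1 ∧
    (∀ j : ℕ, (k (j + 1) : ℝ) ≤ 1 + α * k j) ∧
    (∀ j : ℕ, 1 ≤ j → (k j : ℝ) ≤ α ^ j * k 0 + 1 / (1 - α)) := by
  intro α k
  have hb' : (3 : ℝ) ≤ b := by exact_mod_cast hb
  have hα0 : 0 ≤ α := Real.logb_nonneg (by linarith) (by linarith)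
  have hα1 : α < 1 := by
    rw [← Real.logb_self_eq_one (b := b) (by linarith)]
    exact Real.logb_lt_logb (by linarith) (by linarith) (by linarith)
  have step (j : ℕ) : (k (j + 1) : ℝ) ≤ 1 + α * k j := by
    have h := Nat.length_digits_erdosSloane_le (b := b) (by omega) ((erdosSloane b)^[j] n)
    rwa [← Function.iterate_succ_apply' (erdosSloane b)] at h
  exact ⟨hα1, step, fun j _ =>
    le_pow_mul_add_div_one_sub_of_succ_le (x := fun j => (k j : ℝ)) hα0 hα1 zero_le_one step j⟩

theorem erdos_sloane_digit_count_decay (b n : ℕ) (hb : 3 ≤ b) (hn : b < n) :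
    let α : ℝ := Real.log (b - 1) / Real.log b
    let k : ℕ → ℕ := fun j => (Nat.digits b ((erdosSloane b)^[j] n)).length
    α < 1 ∧
    (∀ j : ℕ, (k (j + 1) : ℝ) ≤ 1 + α * k j) ∧
    (∀ j : ℕ, 1 ≤ j → (k j : ℝ) ≤ α ^ j * k 0 + 1 / (1 - α)) :=
  erdos_sloane_digit_count_decay_general b n hb
end

section
/- For each base b ≥ 3, there exists a constant C such that for all n ≥ 3, the Erdős–Sloane persistence of n satisfies ν_b^*(n) ≤ (log log n)/log(α^{−1}) + C, where α = log_b(b−1). In particular, limsup_{n→∞} ν_b^*(n)/(log log n) ≤ 1/log(α^{−1}). -/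
/-- The Erdős–Sloane persistence: least k such that the k-th iterate is a single digit. -/
noncomputable def erdosPersistence (b n : ℕ) : ℕ := sInf {k : ℕ | (erdosSloane b)^[k] n < b}

/-!
A number with `L` base-`b` digits satisfies `b ^ (L - 1) ≤ n`, and each nonzero digit is at
most `b - 1`, so `log S(n) ≤ α log n + log (b - 1)`: on a logarithmic scale the map is a
contraction of ratio `α < 1` up to an additive constant. After `k = ⌈log log n / log α⁻¹⌉`
steps, `log S^k(n)` is therefore bounded by a constant depending only on `b`, and since `S`
strictly decreases every number `≥ b`, the remaining persistence is at most `S^k(n)`.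
-/

open Filter Real

lemma le_pow_mul_add_div_one_sub_of_le_mul_add {x : ℕ → ℝ} {α c : ℝ} (hα₀ : 0 ≤ α)
    (hα₁ : α < 1) (hc : 0 ≤ c) (hx : ∀ k, x (k + 1) ≤ α * x k + c) (k : ℕ) :
    x k ≤ α ^ k * x 0 + c / (1 - α) := by
  have hfix : α * (c / (1 - α)) + c = c / (1 - α) := by
    field_simp [(sub_pos.2 hα₁).ne']
    ring
  induction k with
  | zero => simpa using div_nonneg hc (sub_pos.2 hα₁).le
  | succ k ih =>
    calc x (k + 1) ≤ α * x k + c := hx k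
      _ ≤ α * (α ^ k * x 0 + c / (1 - α)) + c := by gcongr
      _ = α ^ (k + 1) * x 0 + c / (1 - α) := by linear_combination hfix

lemma pow_ceil_log_div_log_inv_mul_le_one {α x : ℝ} (hα₀ : 0 < α) (hα₁ : α < 1) (hx : 0 < x) :
    α ^ ⌈log x / log α⁻¹⌉₊ * x ≤ 1 := by
  have hr : 0 < log α⁻¹ := log_pos (one_lt_inv_iff₀.2 ⟨hα₀, hα₁⟩)
  have hk : log x ≤ ⌈log x / log α⁻¹⌉₊ * log α⁻¹ :=
    (div_le_iff₀ hr).1 (Nat.le_ceil _)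
  rw [← log_nonpos_iff (by positivity), log_mul (by positivity) hx.ne', log_pow, log_inv] at *
  linarith

lemma limsup_div_le_of_le_mul_add {ι : Type*} {l : Filter ι} [l.NeBot] {f g : ι → ℝ} {a C : ℝ}
    (hf : ∀ i, 0 ≤ f i) (hg : Tendsto g l atTop) (hfg : ∀ᶠ i in l, f i ≤ a * g i + C) :
    limsup (fun i => f i / g i) l ≤ a := by
  have hbound : Tendsto (fun i => a + C / g i) l (nhds (a + 0)) :=
    tendsto_const_nhds.add (tendsto_const_nhds.div_atTop hg)
  have hle : ∀ᶠ i in l, f i / g i ≤ a + C / g i := by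
    filter_upwards [hfg, hg.eventually_gt_atTop 0] with i hi hgi
    rw [div_le_iff₀ hgi, add_mul, div_mul_cancel₀ _ hgi.ne']
    exact hi
  have hcobdd : IsCoboundedUnder (· ≤ ·) l fun i => f i / g i :=
    isCoboundedUnder_le_of_eventually_le l <| by
      filter_upwards [hg.eventually_gt_atTop 0] with i hgi
      exact div_nonneg (hf i) hgi.le
  calc limsup (fun i => f i / g i) l ≤ limsup (fun i => a + C / g i) l :=
        limsup_le_limsup hle hcobdd hbound.isBoundedUnder_le
    _ = a := by rw [hbound.limsup_eq, add_zero]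

lemma Nat.sub_one_mul_div_lt {b n : ℕ} (hn : n ≠ 0) : (b - 1) * (n / b) < n := by
  rcases Nat.eq_zero_or_pos (n / b) with h | h
  · rw [h, mul_zero]
    exact Nat.pos_of_ne_zero hn
  · have := Nat.mul_div_le n b
    rw [Nat.sub_one_mul]
    omega

@[simp] lemma erdosSloane_zero (b : ℕ) : erdosSloane b 0 = 1 := by simp [erdosSloane]

lemma erdosSloane_pos (b n : ℕ) : 0 < erdosSloane b n :=
  List.prod_pos fun _ hd => Nat.pos_of_ne_zero (by simpa using (List.mem_filter.1 hd).2)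

section
variable {b : ℕ}

lemma erdosSloane_of_lt {n : ℕ} (hn : n ≠ 0) (hnb : n < b) : erdosSloane b n = n := by
  simp [erdosSloane, Nat.digits_of_lt b n hn hnb, hn]

lemma erdosSloane_le_sub_one_mul_div (hb : 1 < b) {n : ℕ} (hn : n ≠ 0) :
    erdosSloane b n ≤ (b - 1) * erdosSloane b (n / b) := by
  rw [erdosSloane, Nat.digits_def' hb (Nat.pos_of_ne_zero hn), List.filter_cons]
  have hmod := Nat.mod_lt n (by omega : 0 < b)
  split_ifs with h
  · exact Nat.mul_le_mul_right _ (Nat.le_sub_one_of_lt hmod)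
  · simp only [erdosSloane]
    exact Nat.le_mul_of_pos_left _ (by omega)

lemma erdosSloane_le_self (hb : 1 < b) {n : ℕ} (hn : n ≠ 0) : erdosSloane b n ≤ n := by
  induction n using Nat.strong_induction_on with
  | _ n ih =>
    rcases lt_or_ge n b with hnb | hbn
    · exact (erdosSloane_of_lt hn hnb).le
    · have hq : n / b ≠ 0 := (Nat.div_pos hbn (by omega)).ne'
      calc erdosSloane b n ≤ (b - 1) * erdosSloane b (n / b) := erdosSloane_le_sub_one_mul_div hb hn
        _ ≤ (b - 1) * (n / b) := Nat.mul_le_mul_left _ (ih _ (Nat.div_lt_self (by omega) hb) hq)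
        _ ≤ n := (Nat.sub_one_mul_div_lt hn).le

lemma erdosSloane_lt_self (hb : 1 < b) {n : ℕ} (hbn : b ≤ n) : erdosSloane b n < n := by
  have hn : n ≠ 0 := by omega
  calc erdosSloane b n ≤ (b - 1) * erdosSloane b (n / b) := erdosSloane_le_sub_one_mul_div hb hn
    _ ≤ (b - 1) * (n / b) :=
      Nat.mul_le_mul_left _ (erdosSloane_le_self hb (Nat.div_pos hbn (by omega)).ne')
    _ < n := Nat.sub_one_mul_div_lt hn

lemma erdosSloane_le_pow_length_digits (hb : 1 < b) (n : ℕ) :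
    erdosSloane b n ≤ (b - 1) ^ (Nat.digits b n).length :=
  calc erdosSloane b n ≤ (b - 1) ^ ((Nat.digits b n).filter (· ≠ 0)).length :=
        List.prod_le_pow_card _ _ fun d hd =>
          Nat.le_sub_one_of_lt (Nat.digits_lt_base hb (List.mem_of_mem_filter hd))
    _ ≤ (b - 1) ^ (Nat.digits b n).length :=
        Nat.pow_le_pow_right (by omega) (List.length_filter_le _ _)

lemma exists_le_iterate_erdosSloane_lt (hb : 1 < b) (n : ℕ) :
    ∃ k ≤ n, (erdosSloane b)^[k] n < b := by
  induction n using Nat.strong_induction_on with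
  | _ n ih =>
    rcases lt_or_ge n b with hnb | hbn
    · exact ⟨0, Nat.zero_le n, hnb⟩
    · obtain ⟨k, hk, hks⟩ := ih _ (erdosSloane_lt_self hb hbn)
      exact ⟨k + 1, by have := erdosSloane_lt_self hb hbn; omega, hks⟩

lemma erdosPersistence_le_of_iterate_lt {n k : ℕ} (h : (erdosSloane b)^[k] n < b) :
    erdosPersistence b n ≤ k :=
  Nat.sInf_le h

lemma iterate_erdosPersistence_lt (hb : 1 < b) (n : ℕ) :
    (erdosSloane b)^[erdosPersistence b n] n < b :=
  let ⟨k, _, hk⟩ := exists_le_iterate_erdosSloane_lt hb n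
  Nat.sInf_mem (s := {k | (erdosSloane b)^[k] n < b}) ⟨k, hk⟩

lemma erdosPersistence_le_self (hb : 1 < b) (n : ℕ) : erdosPersistence b n ≤ n :=
  let ⟨_, hk, hks⟩ := exists_le_iterate_erdosSloane_lt hb n
  (erdosPersistence_le_of_iterate_lt hks).trans hk

lemma erdosPersistence_le_add_iterate (hb : 1 < b) (n k : ℕ) :
    erdosPersistence b n ≤ k + erdosPersistence b ((erdosSloane b)^[k] n) := by
  apply erdosPersistence_le_of_iterate_lt
  rw [add_comm, Function.iterate_add_apply]
  exact iterate_erdosPersistence_lt hb _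

lemma log_erdosSloane_le (hb : 1 < b) (n : ℕ) :
    log (erdosSloane b n) ≤ logb b (b - 1) * log n + log (b - 1) := by
  have hb' : (2 : ℝ) ≤ b := by exact_mod_cast hb
  have hlogb : 0 < log b := log_pos (by linarith)
  have hlogb₁ : 0 ≤ log ((b : ℝ) - 1) := log_nonneg (by linarith)
  rcases eq_or_ne n 0 with rfl | hn
  · simpa using hlogb₁
  set L := (Nat.digits b n).length
  have hS : (erdosSloane b n : ℝ) ≤ ((b : ℝ) - 1) ^ L := by
    have h := (Nat.cast_le (α := ℝ)).2 (erdosSloane_le_pow_length_digits hb n)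
    rwa [Nat.cast_pow, Nat.cast_sub hb.le, Nat.cast_one] at h
  have hL : (L : ℝ) ≤ 1 + log n / log b := by
    have : ((b : ℝ) ^ L) ≤ b * n := by exact_mod_cast Nat.base_pow_length_digits_le b n hb hn
    have := log_le_log (by positivity) this
    rw [log_pow, log_mul (by positivity) (by exact_mod_cast hn)] at this
    rw [add_div' _ _ _ hlogb.ne', le_div_iff₀ hlogb]
    linarith
  calc log (erdosSloane b n) ≤ log (((b : ℝ) - 1) ^ L) :=
        log_le_log (by exact_mod_cast erdosSloane_pos b n) hS
    _ = L * log (b - 1) := log_pow _ _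
    _ ≤ (1 + log n / log b) * log (b - 1) := by gcongr
    _ = logb b (b - 1) * log n + log (b - 1) := by rw [logb]; ring

lemma logb_sub_one_lt_one (hb : 1 < b) : logb b (b - 1) < 1 := by
  have hb' : (1 : ℝ) < b := by exact_mod_cast hb
  calc logb b (b - 1) < logb b b := logb_lt_logb hb' (by linarith) (by linarith)
    _ = 1 := logb_self_eq_one hb'

lemma log_iterate_erdosSloane_le (hb : 1 < b) (n k : ℕ) :
    log ((erdosSloane b)^[k] n) ≤
      logb b (b - 1) ^ k * log n + log (b - 1) / (1 - logb b (b - 1)) := by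
  have hb' : (2 : ℝ) ≤ b := by exact_mod_cast hb
  refine le_pow_mul_add_div_one_sub_of_le_mul_add (x := fun k => log ((erdosSloane b)^[k] n))
    (logb_nonneg (by linarith) (by linarith)) (logb_sub_one_lt_one hb) (log_nonneg (by linarith))
    (fun k => ?_) k
  rw [Function.iterate_succ_apply']
  exact log_erdosSloane_le hb _

theorem erdosPersistence_le_log_log_div_add (hb : 3 ≤ b) :
    ∃ C : ℝ, ∀ n : ℕ, 3 ≤ n →
      (erdosPersistence b n : ℝ) ≤ log (log n) / log (logb b (b - 1))⁻¹ + C := by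
  set α := logb b (b - 1)
  set M := log (b - 1) / (1 - α)
  have hb' : (3 : ℝ) ≤ b := by exact_mod_cast hb
  have hα₀ : 0 < α := logb_pos (by linarith) (by linarith)
  have hα₁ : α < 1 := logb_sub_one_lt_one (by omega)
  have hr : 0 < log α⁻¹ := log_pos (one_lt_inv_iff₀.2 ⟨hα₀, hα₁⟩)
  refine ⟨1 + exp (1 + M), fun n hn => ?_⟩
  have hlog : 1 ≤ log n := by
    have hn' : (3 : ℝ) ≤ n := by exact_mod_cast hn
    rw [le_log_iff_exp_le (by positivity)]
    linarith [exp_one_lt_d9]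
  set k := ⌈log (log n) / log α⁻¹⌉₊
  have hk : (k : ℝ) ≤ log (log n) / log α⁻¹ + 1 :=
    (Nat.ceil_lt_add_one (div_nonneg (log_nonneg hlog) hr.le)).le
  -- `α ^ k * log n ≤ 1`, so only the fixed point `M` of the affine contraction survives
  have hiter : ((erdosSloane b)^[k] n : ℝ) ≤ exp (1 + M) := by
    refine (le_exp_log _).trans (exp_le_exp.2 ?_)
    linarith [log_iterate_erdosSloane_le (by omega : 1 < b) n k,
      pow_ceil_log_div_log_inv_mul_le_one hα₀ hα₁ (by linarith : 0 < log n)]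
  have hpers : (erdosPersistence b n : ℝ) ≤ k + ((erdosSloane b)^[k] n : ℕ) := by
    exact_mod_cast (erdosPersistence_le_add_iterate (by omega) n k).trans
      (Nat.add_le_add_left (erdosPersistence_le_self (by omega) _) k)
  linarith

end

theorem erdos_sloane_persistence_upper (b : ℕ) (hb : 3 ≤ b) :
    let α : ℝ := Real.log (b - 1) / Real.log b
    (∃ C : ℝ, ∀ n : ℕ, 3 ≤ n →
      (erdosPersistence b n : ℝ) ≤ Real.log (Real.log n) / Real.log α⁻¹ + C) ∧
    Filter.limsup (fun n : ℕ => (erdosPersistence b n : ℝ) / Real.log (Real.log n))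
      Filter.atTop ≤ 1 / Real.log α⁻¹ := by
  intro α
  obtain ⟨C, hC⟩ := erdosPersistence_le_log_log_div_add hb
  refine ⟨⟨C, hC⟩, limsup_div_le_of_le_mul_add (C := C) (fun n => Nat.cast_nonneg _)
    (tendsto_log_atTop.comp (tendsto_log_atTop.comp tendsto_natCast_atTop_atTop)) ?_⟩
  filter_upwards [eventually_ge_atTop 3] with n hn
  rw [one_div_mul_eq_div]
  exact hC n hn
end

section
/- For every integer b ≥ 5, (b+1)!^{log_b(b+1)/b} < b. -/
/-!
Taking logarithms, the claim is `log (b+1)! · log (b+1) < b (log b)²`. Stirling's upper bound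
`n! ≤ e √n (n/e)^n` together with `3 log (b+1) ≤ 2b - 4` gives `log (b+1)! ≤ b log (b+1) - 2`,
while `log (b+1) - 1/b ≤ log b`. Writing `L = log (b+1)`,
`(bL - 2) L = b (L - 1/b)² - 1/b < b (log b)²`.
-/

open Real Stirling
open scoped Nat

theorem Stirling.stirlingSeq_le_stirlingSeq_one {n : ℕ} (hn : n ≠ 0) :
    stirlingSeq n ≤ exp 1 / √2 := by
  obtain ⟨m, rfl⟩ := Nat.exists_eq_succ_of_ne_zero hn
  simpa using stirlingSeq'_antitone (Nat.zero_le m)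

theorem Stirling.factorial_le_stirling {n : ℕ} (hn : n ≠ 0) :
    (n ! : ℝ) ≤ exp 1 * √n * (n / exp 1) ^ n := by
  have hpos : 0 < √(2 * n : ℝ) * (n / exp 1) ^ n := by positivity
  have h := stirlingSeq_le_stirlingSeq_one hn
  rw [stirlingSeq, div_le_iff₀ hpos, sqrt_mul zero_le_two] at h
  calc (n ! : ℝ) ≤ exp 1 / √2 * (√2 * √n * (n / exp 1) ^ n) := h
    _ = exp 1 * √n * (n / exp 1) ^ n := by field_simp

theorem Stirling.log_factorial_le_stirling {n : ℕ} (hn : n ≠ 0) :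
    log n ! ≤ n * log n - n + log n / 2 + 1 := by
  have hn' : (0 : ℝ) < n := by positivity
  calc log n ! ≤ log (exp 1 * √n * (n / exp 1) ^ n) :=
        log_le_log (by positivity) (factorial_le_stirling hn)
    _ = n * log n - n + log n / 2 + 1 := by
      rw [log_mul (by positivity) (by positivity), log_mul (by positivity) (by positivity),
        log_sqrt hn'.le, log_pow, log_div hn'.ne' (exp_pos 1).ne', log_exp]
      ring

theorem Real.log_six_lt_two : log 6 < 2 := by
  rw [log_lt_iff_lt_exp (by norm_num), show (2 : ℝ) = 1 + 1 by norm_num, exp_add]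
  nlinarith [exp_one_gt_d9]

theorem Real.three_mul_log_le_two_mul_sub_six {x : ℝ} (hx : 6 ≤ x) : 3 * log x ≤ 2 * x - 6 := by
  have hsplit : log x = log 6 + log (x / 6) := by
    rw [log_div (by linarith) (by norm_num)]
    ring
  have := log_le_sub_one_of_pos (show 0 < x / 6 by positivity)
  linarith [log_six_lt_two]

theorem Real.log_add_one_sub_log_le {x : ℝ} (hx : 0 < x) : log (x + 1) - log x ≤ 1 / x := by
  rw [← log_div (by linarith) hx.ne']
  calc log ((x + 1) / x) ≤ (x + 1) / x - 1 := log_le_sub_one_of_pos (by positivity)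
    _ = 1 / x := by field_simp; ring

theorem log_factorial_succ_le {b : ℕ} (hb : 5 ≤ b) :
    log (b + 1)! ≤ b * log (b + 1) - 2 := by
  have hstirling := log_factorial_le_stirling b.succ_ne_zero
  have hlog := three_mul_log_le_two_mul_sub_six (x := b + 1) (by norm_cast; omega)
  push_cast at hstirling
  linarith

theorem factorial_rpow_lt (b : ℕ) (hb : 5 ≤ b) :
    ((Nat.factorial (b + 1) : ℝ)) ^ (Real.log (b + 1) / Real.log b / b) < (b : ℝ) := by
  have hb5 : (5 : ℝ) ≤ b := by exact_mod_cast hb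
  have hb0 : (0 : ℝ) < b := by linarith
  set L := log ((b : ℝ) + 1)
  set M := log (b : ℝ)
  have hM : 0 < M := log_pos (by linarith)
  have hL : 1 ≤ L := by
    rw [le_log_iff_exp_le (by positivity)]
    linarith [exp_one_lt_three]
  have hinv : 1 / (b : ℝ) ≤ 1 := by rw [div_le_one hb0]; linarith
  have hK : log (b + 1)! ≤ b * L - 2 := log_factorial_succ_le hb
  have hLM : L - 1 / b ≤ M := by linarith [log_add_one_sub_log_le hb0]
  have key : log (b + 1)! * L < b * M ^ 2 := calc
    log (b + 1)! * L ≤ (b * L - 2) * L := by gcongr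
    _ = b * (L - 1 / b) ^ 2 - 1 / b := by field_simp; ring
    _ < b * (L - 1 / b) ^ 2 := by linarith [one_div_pos.2 hb0]
    _ ≤ b * M ^ 2 := by gcongr; linarith
  rw [rpow_lt_iff_lt_log (by positivity) hb0, div_div, div_mul_eq_mul_div,
    div_lt_iff₀ (by positivity)]
  linarith
end

section
/- For every integer b ≥ 5, (b+1)^{2·log_b(b−2) + log_b(b+1)} < b^3; equivalently, log(b+1)·(2·log(b−2) + log(b+1)) < 3·(log b)^2. -/
/-!
With `y = log (x + 1)`, `z = log (x - 1)` and `L = log x`, concavity of `log` gives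
`2 log (x - 2) + y < 3 z`, and `y + z < 2 L` (from `x² - 1 < x²`) gives `y z < L²` by AM-GM.
Hence `y (2 log (x - 2) + y) < 3 y z < 3 L²`; dividing by `L` and exponentiating gives the
`rpow` form.
-/

lemma mul_lt_sq_of_add_lt {a b c : ℝ} (hab : 0 < a + b) (h : a + b < 2 * c) : a * b < c ^ 2 := by
  nlinarith [sq_nonneg (a - b)]

namespace Real

lemma two_mul_log_sub_two_add_log_add_one_lt {x : ℝ} (hx : 2 < x) :
    2 * log (x - 2) + log (x + 1) < 3 * log (x - 1) := by
  have hpoly : (x - 2) ^ 2 * (x + 1) < (x - 1) ^ 3 := by nlinarith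
  have := log_lt_log (by positivity) hpoly
  rwa [log_mul (by positivity) (by linarith), log_pow, log_pow, Nat.cast_ofNat,
    Nat.cast_ofNat] at this

lemma log_sub_one_add_log_add_one_lt {x : ℝ} (hx : 1 < x) :
    log (x - 1) + log (x + 1) < 2 * log x := by
  have hpoly : (x - 1) * (x + 1) < x ^ 2 := by nlinarith
  have := log_lt_log (by nlinarith) hpoly
  rwa [log_mul (by linarith) (by linarith), log_pow, Nat.cast_ofNat] at this

lemma log_sub_one_mul_log_add_one_lt_sq {x : ℝ} (hx : 2 < x) :
    log (x - 1) * log (x + 1) < log x ^ 2 :=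
  mul_lt_sq_of_add_lt (add_pos (log_pos (by linarith)) (log_pos (by linarith)))
    (log_sub_one_add_log_add_one_lt (by linarith))

lemma log_add_one_mul_two_mul_log_sub_two_add_log_add_one_lt {x : ℝ} (hx : 2 < x) :
    log (x + 1) * (2 * log (x - 2) + log (x + 1)) < 3 * log x ^ 2 := by
  have hy : 0 < log (x + 1) := log_pos (by linarith)
  calc log (x + 1) * (2 * log (x - 2) + log (x + 1))
      < log (x + 1) * (3 * log (x - 1)) :=
        mul_lt_mul_of_pos_left (two_mul_log_sub_two_add_log_add_one_lt hx) hy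
    _ = 3 * (log (x - 1) * log (x + 1)) := by ring
    _ < 3 * log x ^ 2 := by linarith [log_sub_one_mul_log_add_one_lt_sq hx]

lemma rpow_div_log_lt_pow_iff {c x u : ℝ} (hc : 0 < c) (hx : 1 < x) (n : ℕ) :
    c ^ (u / log x) < x ^ n ↔ log c * u < n * log x ^ 2 := by
  have hL : 0 < log x := log_pos hx
  rw [← log_lt_log_iff (rpow_pos_of_pos hc _) (by positivity), log_rpow hc, log_pow,
    div_mul_eq_mul_div, div_lt_iff₀ hL]
  constructor <;> intro h <;> nlinarith

end Real

open Real in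
theorem succ_rpow_combined_lt (b : ℕ) (hb : 5 ≤ b) :
    ((b : ℝ) + 1) ^ (2 * (Real.log ((b : ℝ) - 2) / Real.log b) +
      Real.log ((b : ℝ) + 1) / Real.log b) < (b : ℝ) ^ 3 ∧
    Real.log ((b : ℝ) + 1) * (2 * Real.log ((b : ℝ) - 2) + Real.log ((b : ℝ) + 1)) <
      3 * (Real.log b) ^ 2 := by
  have hb2 : (2 : ℝ) < b := by exact_mod_cast (by omega : 2 < b)
  have key := log_add_one_mul_two_mul_log_sub_two_add_log_add_one_lt hb2
  refine ⟨?_, key⟩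
  rw [mul_div_assoc', ← add_div, rpow_div_log_lt_pow_iff (by linarith) (by linarith)]
  exact_mod_cast key
end

section
/- Let b ≥ 5 and t be positive integers with t ≤ b/4. Then b^{log_b(t) − 1} · (b+t−1)^{log_b(b+t−1)} / b < 1; equivalently, log(b)·log(t) + (log(b+t−1))^2 < 2·(log b)^2. -/
/-!
With `L = log b`, the bounds `t ≤ b/4` and `b + t - 1 ≤ 5b/4` give `log t ≤ L - log 4` and
`log (b + t - 1) ≤ L + log (5/4)`, so the left-hand side is at most
`2L² - (L · log (64/25) - log (5/4)²)`, and the bracket is positive as soon as `b ≥ 64/25`.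
The power form is the same inequality after taking logarithms, since `b ^ (log_b t - 1) = t / b`.
-/

open Real

theorem log_mul_log_add_log_sq_lt {b t x : ℝ} (hb : 64 / 25 ≤ b) (ht : 0 < t) (htb : 4 * t ≤ b)
    (hx : 1 ≤ x) (hxb : 4 * x ≤ 5 * b) :
    log b * log t + log x ^ 2 < 2 * log b ^ 2 := by
  set a := log (5 / 4 : ℝ)
  set c := log (64 / 25 : ℝ)
  have hcL : c ≤ log b := log_le_log (by norm_num) hb
  have hac : a < c := log_lt_log (by norm_num) (by norm_num)
  have ha : 0 ≤ a := log_nonneg (by norm_num)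
  have hc : c = log 4 - 2 * a := by
    simp only [c, a]
    rw [show (64 / 25 : ℝ) = 4 / (5 / 4) ^ 2 by norm_num, log_div (by norm_num) (by norm_num),
      log_pow]
    push_cast; ring
  have hlogt : log t ≤ log b - log 4 := by
    rw [← log_div (by linarith) (by norm_num)]
    exact log_le_log ht (by linarith)
  have hlogx : log x ≤ log b + a := by
    rw [← log_mul (by linarith) (by norm_num)]
    exact log_le_log (by linarith) (by linarith)
  calc log b * log t + log x ^ 2
      ≤ log b * (log b - log 4) + (log b + a) ^ 2 :=
        add_le_add (mul_le_mul_of_nonneg_left hlogt (ha.trans (hac.le.trans hcL)))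
          (pow_le_pow_left₀ (log_nonneg hx) hlogx 2)
    _ = 2 * log b ^ 2 - (log b * c - a ^ 2) := by rw [hc]; ring
    _ < 2 * log b ^ 2 := by nlinarith

theorem rpow_logb_sub_one_mul_rpow_logb_div_lt_one_iff {b t x : ℝ} (hb : 1 < b) (hx : 0 < x) :
    b ^ (log t / log b - 1) * x ^ (log x / log b) / b < 1 ↔
      log b * log t + log x ^ 2 < 2 * log b ^ 2 := by
  have hb0 : 0 < b := by linarith
  have hL : 0 < log b := log_pos hb
  have hexp : log b * (log t / log b - 1) + log x * (log x / log b) - log b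
      = (log b * log t + log x ^ 2 - 2 * log b ^ 2) / log b := by
    field_simp; ring
  rw [rpow_def_of_pos hb0, rpow_def_of_pos hx, ← exp_add, ← exp_log hb0, ← exp_sub, exp_log hb0,
    exp_lt_one_iff, hexp, div_lt_iff₀ hL, zero_mul, sub_neg]

theorem shifted_small_t_inequality (b t : ℕ) (hb : 5 ≤ b) (ht : 1 ≤ t) (htb : 4 * t ≤ b) :
    (b : ℝ) ^ (Real.log t / Real.log b - 1) *
      ((b : ℝ) + t - 1) ^ (Real.log ((b : ℝ) + t - 1) / Real.log b) / b < 1 ∧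
    Real.log b * Real.log t + (Real.log ((b : ℝ) + t - 1)) ^ 2 < 2 * (Real.log b) ^ 2 := by
  have hbR : (5 : ℝ) ≤ b := by exact_mod_cast hb
  have htR : (1 : ℝ) ≤ t := by exact_mod_cast ht
  have htbR : 4 * (t : ℝ) ≤ b := by exact_mod_cast htb
  have key := log_mul_log_add_log_sq_lt (b := b) (by linarith) (by linarith) htbR
    (x := (b : ℝ) + t - 1) (by linarith) (by linarith)
  exact ⟨(rpow_logb_sub_one_mul_rpow_logb_div_lt_one_iff (by linarith) (by linarith)).2 key, key⟩
end

section
/- Let b ≥ 5 and t be positive integers with t ≤ b/4. Then ((b+t−1)!/(t−1)!)^{(1/b)·log_b(b+t−1)} < b. -/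
/-!
The quotient is the product `t (t + 1) ⋯ (t + b - 1)` of `b` consecutive integers, so by AM–GM
it is at most `(t + (b - 1) / 2) ^ b < (3b/4) ^ b`. Its `b`-th root is thus below `3b/4`, and
`(3b/4) ^ logb b (b + t - 1) ≤ b` because `b + t - 1 ≤ 5b/4` and
`log (3b/4) · log (5b/4) ≤ (log b)²`, as `(3/4) · (5/4) < 1`.
-/

open Finset Real

theorem Real.prod_le_arith_mean_pow {ι : Type*} (s : Finset ι) (z : ι → ℝ)
    (hz : ∀ i ∈ s, 0 ≤ z i) : ∏ i ∈ s, z i ≤ ((∑ i ∈ s, z i) / #s) ^ #s := by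
  rcases s.eq_empty_or_nonempty with rfl | hs
  · simp
  have hcard : #s ≠ 0 := hs.card_ne_zero
  have hprod : 0 ≤ ∏ i ∈ s, z i := prod_nonneg hz
  have amgm := geom_mean_le_arith_mean s (fun _ ↦ 1) z (fun _ _ ↦ zero_le_one)
    (by simpa using hs) hz
  simp only [rpow_one, sum_const, nsmul_eq_mul, mul_one, one_mul] at amgm
  calc ∏ i ∈ s, z i = ((∏ i ∈ s, z i) ^ (#s : ℝ)⁻¹) ^ #s :=
        (rpow_inv_natCast_pow hprod hcard).symm
    _ ≤ ((∑ i ∈ s, z i) / #s) ^ #s := by gcongr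

theorem Real.sum_range_add (a : ℝ) (n : ℕ) :
    ∑ i ∈ range n, (a + i) = n * (a + (n - 1) / 2) := by
  induction n with
  | zero => simp
  | succ n ih => rw [sum_range_succ, ih]; push_cast; ring

theorem Real.prod_range_add_le (a : ℝ) (ha : 0 ≤ a) (n : ℕ) :
    ∏ i ∈ range n, (a + i) ≤ (a + (n - 1) / 2) ^ n := by
  rcases n.eq_zero_or_pos with rfl | hn
  · simp
  have h := prod_le_arith_mean_pow (range n) (fun i : ℕ ↦ a + i) (fun i _ ↦ by positivity)
  rwa [sum_range_add, card_range, mul_div_cancel_left₀ _ (by positivity)] at h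

theorem factorial_div_factorial_eq_ascFactorial (b t : ℕ) (ht : 0 < t) :
    ((b + t - 1).factorial : ℝ) / (t - 1).factorial = t.ascFactorial b := by
  rw [div_eq_iff (by positivity), add_comm b, ← Nat.factorial_mul_ascFactorial' t b ht]
  push_cast
  ring

theorem Real.log_mul_log_mul_le_log_sq {x c d : ℝ} (hx : 1 ≤ x) (hc : 0 < c) (hc1 : c ≤ 1)
    (hd : 1 ≤ d) (hcd : c * d ≤ 1) : log (c * x) * log (d * x) ≤ log x ^ 2 := by
  have hx0 : 0 < x := by linarith
  rw [log_mul hc.ne' hx0.ne', log_mul (by linarith) hx0.ne']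
  have hlogc : log c ≤ 0 := log_nonpos hc.le hc1
  have hlogd : 0 ≤ log d := log_nonneg hd
  have hlogcd : log c + log d ≤ 0 := by
    rw [← log_mul hc.ne' (by linarith)]; exact log_nonpos (by positivity) hcd
  nlinarith [log_nonneg hx, mul_nonpos_of_nonpos_of_nonneg hlogc hlogd]

theorem Real.three_quarters_mul_rpow_logb_le {b y : ℝ} (hb : 4 / 3 ≤ b) (hy : 0 < y)
    (hyb : y ≤ 5 / 4 * b) : (3 / 4 * b) ^ logb b y ≤ b := by
  have hlogb : 0 < log b := log_pos (by linarith)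
  rw [rpow_le_iff_le_log (by positivity) (by positivity), logb, div_mul_eq_mul_div,
    div_le_iff₀ hlogb, ← sq]
  calc log y * log (3 / 4 * b) ≤ log (5 / 4 * b) * log (3 / 4 * b) := by
        gcongr
        exact log_nonneg (by linarith)
    _ ≤ log b ^ 2 := by
        rw [mul_comm]
        exact log_mul_log_mul_le_log_sq (by linarith) (by norm_num) (by norm_num) (by norm_num)
          (by norm_num)

theorem factorial_quotient_rpow_lt (b t : ℕ) (hb : 5 ≤ b) (ht : 1 ≤ t) (htb : 4 * t ≤ b) :
    ((Nat.factorial (b + t - 1) : ℝ) / (Nat.factorial (t - 1) : ℝ)) ^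
      ((1 / (b : ℝ)) * (Real.log ((b : ℝ) + t - 1) / Real.log b)) < (b : ℝ) := by
  have hb' : (5 : ℝ) ≤ b := by exact_mod_cast hb
  have ht' : (1 : ℝ) ≤ t := by exact_mod_cast ht
  have htb' : 4 * (t : ℝ) ≤ b := by exact_mod_cast htb
  have hquot : ((b + t - 1).factorial : ℝ) / (t - 1).factorial < (3 / 4 * b) ^ b := by
    rw [factorial_div_factorial_eq_ascFactorial b t ht, Nat.ascFactorial_eq_prod_range]
    push_cast
    calc ∏ i ∈ range b, ((t : ℝ) + i) ≤ (t + (b - 1) / 2) ^ b :=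
          prod_range_add_le _ (by positivity) b
      _ < (3 / 4 * b) ^ b := by gcongr <;> linarith
  rw [log_div_log]
  have hexp : 0 < 1 / (b : ℝ) * logb b (b + t - 1) :=
    mul_pos (by positivity) (logb_pos (by linarith) (by linarith))
  calc _ < ((3 / 4 * (b : ℝ)) ^ b) ^ (1 / (b : ℝ) * logb b (b + t - 1)) :=
        rpow_lt_rpow (by positivity) hquot hexp
    _ = (3 / 4 * (b : ℝ)) ^ logb b (b + t - 1) := by
        rw [rpow_mul (by positivity), one_div, pow_rpow_inv_natCast (by positivity) (by omega)]
    _ ≤ b := three_quarters_mul_rpow_logb_le (by linarith) (by linarith) (by linarith)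
end
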